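/- Define S on full binary trees by S(leaf) = 1 via the recursion S^j(leaf) = j + 1, S^j(node with subtrees T₁, T₂) = (j+1)·S^{j+1}(T₁)·S^0(T₂) in the 'comb-continuation' case and (j+1)·S^0(T₁)·S^0(T₂) otherwise, with S = S^0. Then for the left comb C_p built by successively grafting trees T₂,…,T_p (each of equal size) on the right of T₁ along a chain of p−1 internal nodes decorated ∘, one has S(C_p) = p! · S(T₁) · S(T₂) ⋯ S(T_p). -/
import Mathlib

/-- The decorations `{k, ∘, n, r}`. -/
inductive Dec where
  | k | o | n | r
  deriving DecidableEq

/-- Planar binary rooted trees with node decorations in `{k, ∘, n, r}`. -/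
inductive DTree where
  | leaf : Dec → DTree
  | node : Dec → DTree → DTree → DTree

namespace DTree

/-- The size `|T|`: a `k`-leaf counts 2, any other leaf counts 4, and each internal
node (Poisson bracket) lowers the size by 2. -/
def size : DTree → ℤ
  | leaf Dec.k => 2
  | leaf _ => 4
  | node _ l r => size l + size r - 2

/-- The symmetry factor `S^j`: `S^j(leaf) = j+1`, and at a node with subtrees `T₁, T₂`
one has `S^j = (j+1)·S^{j+1}(T₁)·S^0(T₂)` in the comb-continuation case (`T₁` itself a
node whose right subtree has the same size as `T₂`) and `(j+1)·S^0(T₁)·S^0(T₂)`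
otherwise. -/
def Sj : ℕ → DTree → ℕ
  | j, leaf _ => j + 1
  | j, node _ (leaf d) T2 => (j + 1) * Sj 0 (leaf d) * Sj 0 T2
  | j, node _ (node d T3 T4) T2 =>
      if size T4 = size T2 then (j + 1) * Sj (j + 1) (node d T3 T4) * Sj 0 T2
      else (j + 1) * Sj 0 (node d T3 T4) * Sj 0 T2

/-- The left comb obtained by successively grafting the trees of `L` on the right of
`T₁` along a chain of internal nodes decorated `∘`. -/
def comb (T1 : DTree) (L : List DTree) : DTree :=
  L.foldl (fun a b => node Dec.o a b) T1

end DTree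

open DTree in
lemma comb_key (T1 : DTree) (s : ℤ)
    (hcomb : ∃ d T3 T4, T1 = DTree.node d T3 T4 ∧ DTree.size T4 = s)
    (hbase : ∀ j, DTree.Sj j T1 = (j + 1) * DTree.Sj 0 T1) :
    ∀ L : List DTree, (∀ U ∈ L, DTree.size U = s) →
      (∃ d A B, comb T1 L = DTree.node d A B ∧ DTree.size B = s) ∧
      ∀ j, Sj j (comb T1 L) =
        (∏ i ∈ Finset.range (L.length + 1), (j + 1 + i)) * Sj 0 T1
          * (L.map (Sj 0)).prod := by
  intro L
  induction L using List.reverseRecOn with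
  | nil =>
    intro _
    refine ⟨hcomb, fun j => ?_⟩
    simp [comb, hbase j]
  | append_singleton L' U ih =>
    intro hs
    have hU : size U = s := hs U (by simp)
    have hL' : ∀ V ∈ L', size V = s := fun V hV => hs V (by simp [hV])
    obtain ⟨⟨d, A, B, hC, hB⟩, hS⟩ := ih hL'
    have hcombeq : comb T1 (L' ++ [U]) = DTree.node Dec.o (comb T1 L') U := by
      simp [comb, List.foldl_append]
    constructor
    · exact ⟨Dec.o, comb T1 L', U, hcombeq, hU⟩
    · intro j
      rw [hcombeq, hC]
      rw [show Sj j (DTree.node Dec.o (DTree.node d A B) U)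
          = if size B = size U then (j + 1) * Sj (j + 1) (DTree.node d A B) * Sj 0 U
            else (j + 1) * Sj 0 (DTree.node d A B) * Sj 0 U from rfl]
      rw [if_pos (by rw [hB, hU])]
      rw [← hC, hS (j + 1)]
      have hprod : (∏ i ∈ Finset.range (L'.length + 1 + 1), (j + 1 + i))
          = (j + 1) * ∏ i ∈ Finset.range (L'.length + 1), (j + 1 + 1 + i) := by
        rw [Finset.prod_range_succ' (fun i => j + 1 + i)]
        simp only [add_zero]
        rw [mul_comm]
        congr 1
        exact Finset.prod_congr rfl (fun i _ => by omega)
      simp only [List.length_append, List.length_singleton, List.map_append,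
        List.prod_append, List.map_singleton, List.prod_singleton, hprod]
      ring

/-- For the left comb `C_p` built from `T₁` and `T₂, …, T_p` of equal size, with the
comb-continuation case of the recursion applying along the spine (in particular at the
bottom node, where `T₁` is a node whose right subtree has the common size `s`, and
`S^j(T₁) = (j+1)·S(T₁)`), one has `S(C_p) = p!·S(T₁)·S(T₂)⋯S(T_p)`. -/
theorem stmt_9 (T1 : DTree) (L : List DTree) (s : ℤ) (hL : L ≠ [])
    (hs : ∀ U ∈ L, DTree.size U = s)
    (hcomb : ∃ d T3 T4, T1 = DTree.node d T3 T4 ∧ DTree.size T4 = s)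
    (hbase : ∀ j, DTree.Sj j T1 = (j + 1) * DTree.Sj 0 T1) :
    DTree.Sj 0 (DTree.comb T1 L)
      = (L.length + 1).factorial * DTree.Sj 0 T1 * (L.map (DTree.Sj 0)).prod := by
  have h := ((comb_key T1 s hcomb hbase L hs).2) 0
  rw [h]
  congr 1
  congr 1
  rw [← Finset.prod_range_add_one_eq_factorial]
  apply Finset.prod_congr rfl
  intros; omega
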